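/- arXiv:2409.19602 — 2 statements merged into one kernel-verified Lean document; each statement's English description precedes it below -/
import Mathlib

section
/- Let R be a Γ-graded integral domain and ⋆ a homogeneous star operation on R. Then the map e(⋆) : F(R) → F(R) defined by A^{e(⋆)} := ⋂ { z⁻¹·(C(zA))^⋆ : 0 ≠ z ∈ (R : A) } is a (classical) star operation on R; that is, for all nonzero x ∈ K and all A, B ∈ F(R): (x)^{e(⋆)} = (x), (xA)^{e(⋆)} = x·A^{e(⋆)}, A ⊆ A^{e(⋆)}, A ⊆ B implies A^{e(⋆)} ⊆ B^{e(⋆)}, and (A^{e(⋆)})^{e(⋆)} = A^{e(⋆)}. -/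
open FractionalIdeal
open scoped Classical

section Setup

variable {Γ : Type*} [AddCommMonoid Γ] [LinearOrder Γ] [IsOrderedCancelAddMonoid Γ] [DecidableEq Γ]
  {R : Type*} [CommRing R] [IsDomain R]
  (𝒜 : Γ → AddSubgroup R) [GradedRing 𝒜]
  (K : Type*) [Field K] [Algebra R K] [IsFractionRing R K]

/-- The integral ideal corresponding to a fractional ideal contained in `R`. -/
def idealOf (J : FractionalIdeal (nonZeroDivisors R) K) : Ideal R :=
  (J : Submodule R K).comap (Algebra.linearMap R K)

/-- An integral ideal is homogeneous if it contains all homogeneous components of its elements. -/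
def IsHomIdeal (I : Ideal R) : Prop := ∀ f ∈ I, ∀ γ : Γ, GradedRing.proj 𝒜 γ f ∈ I

/-- `C(I)`: the homogeneous ideal generated by the homogeneous components of elements of `I`. -/
def homC (I : Ideal R) : Ideal R :=
  Ideal.span {x | ∃ f ∈ I, ∃ γ : Γ, x = GradedRing.proj 𝒜 γ f}

/-- `C(J)` for a fractional ideal `J ⊆ R`, as a fractional ideal. -/
def Cfrac (J : FractionalIdeal (nonZeroDivisors R) K) : FractionalIdeal (nonZeroDivisors R) K :=
  ↑(homC 𝒜 (idealOf K J))

/-- A fractional ideal is homogeneous if some nonzero homogeneous `s ∈ R` multiplies it into a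
homogeneous integral ideal. -/
def IsHomFrac (A : FractionalIdeal (nonZeroDivisors R) K) : Prop :=
  ∃ s : R, s ≠ 0 ∧ SetLike.IsHomogeneousElem 𝒜 s ∧
    spanSingleton (nonZeroDivisors R) (algebraMap R K s) * A ≤ 1 ∧
    IsHomIdeal 𝒜 (idealOf K (spanSingleton (nonZeroDivisors R) (algebraMap R K s) * A))

/-- A homogeneous element of the homogeneous quotient field, viewed inside `K`. -/
def IsHomElem (x : K) : Prop :=
  ∃ a b : R, SetLike.IsHomogeneousElem 𝒜 a ∧ SetLike.IsHomogeneousElem 𝒜 b ∧ b ≠ 0 ∧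
    x * algebraMap R K b = algebraMap R K a

end Setup

/-- A homogeneous star operation on the graded domain `R`. -/
structure HomStarOp {Γ : Type*} [AddCommMonoid Γ] [LinearOrder Γ] [IsOrderedCancelAddMonoid Γ] [DecidableEq Γ]
    {R : Type*} [CommRing R] [IsDomain R] (𝒜 : Γ → AddSubgroup R) [GradedRing 𝒜]
    (K : Type*) [Field K] [Algebra R K] [IsFractionRing R K] where
  toFun : FractionalIdeal (nonZeroDivisors R) K → FractionalIdeal (nonZeroDivisors R) K
  hom : ∀ A, A ≠ 0 → IsHomFrac 𝒜 K A → IsHomFrac 𝒜 K (toFun A)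
  map_span : ∀ x : K, x ≠ 0 → IsHomElem 𝒜 K x →
    toFun (spanSingleton (nonZeroDivisors R) x) = spanSingleton (nonZeroDivisors R) x
  map_smul : ∀ x : K, x ≠ 0 → IsHomElem 𝒜 K x → ∀ A, A ≠ 0 → IsHomFrac 𝒜 K A →
    toFun (spanSingleton (nonZeroDivisors R) x * A) = spanSingleton (nonZeroDivisors R) x * toFun A
  le_star : ∀ A, A ≠ 0 → IsHomFrac 𝒜 K A → A ≤ toFun A
  mono : ∀ A B, A ≠ 0 → B ≠ 0 → IsHomFrac 𝒜 K A → IsHomFrac 𝒜 K B → A ≤ B → toFun A ≤ toFun B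
  idem : ∀ A, A ≠ 0 → IsHomFrac 𝒜 K A → toFun (toFun A) = toFun A

/-- A classical star operation on the domain `R`. -/
structure StarOp (R : Type*) [CommRing R] [IsDomain R]
    (K : Type*) [Field K] [Algebra R K] [IsFractionRing R K] where
  toFun : FractionalIdeal (nonZeroDivisors R) K → FractionalIdeal (nonZeroDivisors R) K
  map_span : ∀ x : K, x ≠ 0 →
    toFun (spanSingleton (nonZeroDivisors R) x) = spanSingleton (nonZeroDivisors R) x
  map_smul : ∀ x : K, x ≠ 0 → ∀ A, A ≠ 0 →
    toFun (spanSingleton (nonZeroDivisors R) x * A) = spanSingleton (nonZeroDivisors R) x * toFun A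
  le_star : ∀ A, A ≠ 0 → A ≤ toFun A
  mono : ∀ A B, A ≠ 0 → B ≠ 0 → A ≤ B → toFun A ≤ toFun B
  idem : ∀ A, A ≠ 0 → toFun (toFun A) = toFun A

section EStar

variable {Γ : Type*} [AddCommMonoid Γ] [LinearOrder Γ] [IsOrderedCancelAddMonoid Γ] [DecidableEq Γ]
  {R : Type*} [CommRing R] [IsDomain R]
  (𝒜 : Γ → AddSubgroup R) [GradedRing 𝒜]
  (K : Type*) [Field K] [Algebra R K] [IsFractionRing R K]

/-- The submodule `⋂ { z⁻¹ (C(zA))^⋆ : 0 ≠ z ∈ (R : A) }`. -/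
def eStarSub (s : HomStarOp 𝒜 K) (A : FractionalIdeal (nonZeroDivisors R) K) : Submodule R K :=
  ⨅ z ∈ {z : K | z ≠ 0 ∧ spanSingleton (nonZeroDivisors R) z * A ≤ 1},
    ↑(spanSingleton (nonZeroDivisors R) z⁻¹ *
      s.toFun (Cfrac 𝒜 K (spanSingleton (nonZeroDivisors R) z * A)))

/-- The extension `e(⋆)` of a homogeneous star operation `⋆`,
`A^{e(⋆)} := ⋂ { z⁻¹ (C(zA))^⋆ : 0 ≠ z ∈ (R : A) }` (which is a fractional ideal whenever
`A` is a nonzero fractional ideal). -/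
noncomputable def eStar (s : HomStarOp 𝒜 K) (A : FractionalIdeal (nonZeroDivisors R) K) :
    FractionalIdeal (nonZeroDivisors R) K :=
  if h : IsFractional (nonZeroDivisors R) (eStarSub 𝒜 K s A) then ⟨_, h⟩ else 0

end EStar



/-!
Every term `z⁻¹ (C(zA))^⋆` of the intersection contains `A` (as `zA ⊆ C(zA) ⊆ (C(zA))^⋆`), and
`(R : A)` always has a nonzero element, so `A^{e(⋆)}` is a fractional ideal containing `A`.
Multiplying `A` by `x` reindexes the intersection by `z ↦ z x⁻¹` and rescales each term by `x`.
For idempotence, fix `z` and put `B = (C(zA))^⋆ ⊆ R`. Then `z A^{e(⋆)} ⊆ B`, and since `B` is a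
homogeneous ideal, `(C(z A^{e(⋆)}))^⋆ ⊆ (C(B))^⋆ = B^⋆ = B`. That a homogeneous fractional ideal
inside `R` is a homogeneous ideal uses the cancellativity of `Γ`: if `t` is homogeneous of degree
`δ`, the degree `δ + γ` component of `t f` is `t` times the degree `γ` component of `f`.
-/

open scoped nonZeroDivisors

theorem Ideal.IsHomogeneous.of_span_singleton_mul {ι σ R : Type*} [DecidableEq ι]
    [AddLeftCancelMonoid ι] [CommRing R] [IsDomain R] [SetLike σ R] [AddSubmonoidClass σ R]
    {𝒜 : ι → σ} [GradedRing 𝒜] {t : R} {I : Ideal R} (ht0 : t ≠ 0)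
    (ht : SetLike.IsHomogeneousElem 𝒜 t) (h : (Ideal.span {t} * I).IsHomogeneous 𝒜) :
    I.IsHomogeneous 𝒜 := by
  obtain ⟨δ, htδ⟩ := ht
  intro γ f hf
  have hproj := h (δ + γ) (Ideal.mul_mem_mul (Ideal.mem_span_singleton_self t) hf)
  rw [DirectSum.coe_decompose_mul_add_of_left_mem 𝒜 htδ] at hproj
  obtain ⟨g, hg, hgf⟩ := Ideal.mem_span_singleton_mul.mp hproj
  rwa [← mul_left_cancel₀ ht0 hgf]

section Homogeneous

variable {Γ : Type*} [AddCommMonoid Γ] [DecidableEq Γ] {R : Type*} [CommRing R]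
  (𝒜 : Γ → AddSubgroup R) [GradedRing 𝒜]

theorem isHomIdeal_iff {I : Ideal R} : IsHomIdeal 𝒜 I ↔ I.IsHomogeneous 𝒜 := by
  simp only [IsHomIdeal, GradedRing.proj_apply]
  exact ⟨fun h γ f hf => h f hf γ, fun h f hf γ => h γ hf⟩

theorem homC_eq_homogeneousHull (I : Ideal R) : homC 𝒜 I = (I.homogeneousHull 𝒜).toIdeal := by
  refine congrArg Ideal.span (Set.ext fun x => ?_)
  simp only [GradedRing.proj_apply, Set.mem_ofPred_eq, Subtype.exists, eq_comm (a := x)]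
  exact ⟨fun ⟨f, hf, γ, h⟩ => ⟨γ, f, hf, h⟩, fun ⟨γ, f, hf, h⟩ => ⟨f, hf, γ, h⟩⟩

end Homogeneous

section FractionalIdeal

variable {R : Type*} [CommRing R] (K : Type*) [Field K] [Algebra R K] [IsFractionRing R K]

theorem idealOf_coeIdeal (I : Ideal R) : idealOf K (I : FractionalIdeal R⁰ K) = I :=
  Submodule.comap_map_eq_of_injective (IsFractionRing.injective R K) I

theorem coeIdeal_idealOf {J : FractionalIdeal R⁰ K} (hJ : J ≤ 1) :
    (idealOf K J : FractionalIdeal R⁰ K) = J := by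
  obtain ⟨I, rfl⟩ := le_one_iff_exists_coeIdeal.mp hJ
  rw [idealOf_coeIdeal]

variable {K}

theorem spanSingleton_inv_mul_spanSingleton_mul {x : K} (hx : x ≠ 0) (A : FractionalIdeal R⁰ K) :
    spanSingleton R⁰ x⁻¹ * (spanSingleton R⁰ x * A) = A := by
  rw [← mul_assoc, spanSingleton_mul_spanSingleton, inv_mul_cancel₀ hx, spanSingleton_one,
    one_mul]

theorem spanSingleton_mul_ne_zero {x : K} (hx : x ≠ 0) {A : FractionalIdeal R⁰ K} (hA : A ≠ 0) :
    spanSingleton R⁰ x * A ≠ 0 := fun h =>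
  hA (by rw [← spanSingleton_inv_mul_spanSingleton_mul hx A, h, mul_zero])

theorem le_spanSingleton_inv_mul_iff {x : K} (hx : x ≠ 0) {A B : FractionalIdeal R⁰ K} :
    A ≤ spanSingleton R⁰ x⁻¹ * B ↔ spanSingleton R⁰ x * A ≤ B := by
  have hB := spanSingleton_inv_mul_spanSingleton_mul (inv_ne_zero hx) B
  rw [inv_inv] at hB
  refine ⟨fun h => hB ▸ mul_le_mul_right h _, fun h => ?_⟩
  simpa only [spanSingleton_inv_mul_spanSingleton_mul hx] using
    mul_le_mul_right h (spanSingleton R⁰ x⁻¹)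

def eStarIndex (A : FractionalIdeal R⁰ K) : Set K :=
  {z : K | z ≠ 0 ∧ spanSingleton R⁰ z * A ≤ 1}

theorem nonempty_eStarIndex [Nontrivial R] (A : FractionalIdeal R⁰ K) :
    (eStarIndex A).Nonempty := by
  refine ⟨algebraMap R K A.den, ?_, ?_⟩
  · exact (map_ne_zero_iff _ (IsFractionRing.injective R K)).mpr
      (nonZeroDivisors.coe_ne_zero A.den)
  · rw [den_mul_self_eq_num']
    exact coeIdeal_le_one

theorem mem_eStarIndex_spanSingleton_mul_iff {x w : K} (hx : x ≠ 0) {A : FractionalIdeal R⁰ K} :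
    w ∈ eStarIndex (spanSingleton R⁰ x * A) ↔ w * x ∈ eStarIndex A := by
  simp only [eStarIndex, Set.mem_ofPred_eq, mul_ne_zero_iff_right hx, ← mul_assoc,
    spanSingleton_mul_spanSingleton]

end FractionalIdeal

section Cfrac

variable {Γ : Type*} [AddCommMonoid Γ] [DecidableEq Γ] {R : Type*} [CommRing R]
  (𝒜 : Γ → AddSubgroup R) [GradedRing 𝒜] (K : Type*) [Field K] [Algebra R K]

theorem Cfrac_le_one (J : FractionalIdeal R⁰ K) : Cfrac 𝒜 K J ≤ 1 :=
  coeIdeal_le_one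

theorem isHomElem_one [Nontrivial R] : IsHomElem 𝒜 K (1 : K) :=
  ⟨1, 1, SetLike.isHomogeneousElem_one 𝒜, SetLike.isHomogeneousElem_one 𝒜, one_ne_zero,
    by rw [one_mul, map_one]⟩

variable [IsFractionRing R K] {J J' : FractionalIdeal R⁰ K}

theorem le_Cfrac (hJ : J ≤ 1) : J ≤ Cfrac 𝒜 K J := by
  conv_lhs => rw [← coeIdeal_idealOf K hJ]
  rw [Cfrac, coeIdeal_le_coeIdeal, homC_eq_homogeneousHull]
  exact Ideal.le_toIdeal_homogeneousHull 𝒜 _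

theorem Cfrac_mono (h : J ≤ J') : Cfrac 𝒜 K J ≤ Cfrac 𝒜 K J' := by
  rw [Cfrac, Cfrac, coeIdeal_le_coeIdeal, homC_eq_homogeneousHull, homC_eq_homogeneousHull]
  exact Ideal.homogeneousHull_mono 𝒜 (Submodule.comap_mono (coe_le_coe.mpr h))

theorem Cfrac_ne_zero (hJ : J ≠ 0) (hJ1 : J ≤ 1) : Cfrac 𝒜 K J ≠ 0 :=
  fun h => hJ (le_antisymm (h ▸ le_Cfrac 𝒜 K hJ1) (zero_le _))

theorem Cfrac_one : Cfrac 𝒜 K (1 : FractionalIdeal R⁰ K) = 1 :=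
  (Cfrac_le_one 𝒜 K 1).antisymm (le_Cfrac 𝒜 K le_rfl)

theorem Cfrac_le_self (hJ1 : J ≤ 1) (hJ : IsHomIdeal 𝒜 (idealOf K J)) : Cfrac 𝒜 K J ≤ J := by
  conv_rhs => rw [← coeIdeal_idealOf K hJ1]
  rw [Cfrac, coeIdeal_le_coeIdeal, homC_eq_homogeneousHull,
    ((isHomIdeal_iff 𝒜).mp hJ).toIdeal_homogeneousHull_eq_self]

theorem isHomFrac_of_isHomIdeal [Nontrivial R] {I : Ideal R} (hI : IsHomIdeal 𝒜 I) :
    IsHomFrac 𝒜 K (I : FractionalIdeal R⁰ K) := by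
  refine ⟨1, one_ne_zero, SetLike.isHomogeneousElem_one 𝒜, ?_, ?_⟩ <;>
    rw [map_one, spanSingleton_one, one_mul]
  · exact coeIdeal_le_one
  · rwa [idealOf_coeIdeal]

theorem isHomFrac_Cfrac [Nontrivial R] (J : FractionalIdeal R⁰ K) :
    IsHomFrac 𝒜 K (Cfrac 𝒜 K J) := by
  refine isHomFrac_of_isHomIdeal 𝒜 K ((isHomIdeal_iff 𝒜).mpr ?_)
  rw [homC_eq_homogeneousHull]
  exact (Ideal.homogeneousHull 𝒜 _).isHomogeneous

theorem isHomFrac_one [Nontrivial R] : IsHomFrac 𝒜 K (1 : FractionalIdeal R⁰ K) :=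
  Cfrac_one 𝒜 K ▸ isHomFrac_Cfrac 𝒜 K 1

theorem isHomIdeal_idealOf [IsDomain R] [IsCancelAdd Γ] (hJ1 : J ≤ 1) (hJ : IsHomFrac 𝒜 K J) :
    IsHomIdeal 𝒜 (idealOf K J) := by
  let _ : AddLeftCancelMonoid Γ :=
    { ‹AddCommMonoid Γ› with add_left_cancel _ _ _ := add_left_cancel }
  obtain ⟨t, ht0, ht, -, htJ⟩ := hJ
  obtain ⟨I, rfl⟩ := le_one_iff_exists_coeIdeal.mp hJ1
  rw [← coeIdeal_span_singleton, ← coeIdeal_mul, idealOf_coeIdeal, isHomIdeal_iff] at htJ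
  rw [idealOf_coeIdeal, isHomIdeal_iff]
  exact htJ.of_span_singleton_mul ht0 ht

end Cfrac

namespace HomStarOp

variable {Γ : Type*} [AddCommMonoid Γ] [LinearOrder Γ] [IsOrderedCancelAddMonoid Γ] [DecidableEq Γ]
  {R : Type*} [CommRing R] [IsDomain R] {𝒜 : Γ → AddSubgroup R} [GradedRing 𝒜]
  {K : Type*} [Field K] [Algebra R K] [IsFractionRing R K] (s : HomStarOp 𝒜 K)
  {B : FractionalIdeal R⁰ K}

theorem toFun_one : s.toFun 1 = 1 := by
  simpa using s.map_span 1 one_ne_zero (isHomElem_one 𝒜 K)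

theorem toFun_ne_zero (hB0 : B ≠ 0) (hB : IsHomFrac 𝒜 K B) : s.toFun B ≠ 0 :=
  fun h => hB0 (le_antisymm (h ▸ s.le_star B hB0 hB) (zero_le _))

theorem toFun_le_one (hB0 : B ≠ 0) (hB : IsHomFrac 𝒜 K B) (hB1 : B ≤ 1) : s.toFun B ≤ 1 :=
  s.toFun_one ▸ s.mono B 1 hB0 one_ne_zero hB (isHomFrac_one 𝒜 K) hB1

end HomStarOp

section EStar

variable {Γ : Type*} [AddCommMonoid Γ] [LinearOrder Γ] [IsOrderedCancelAddMonoid Γ] [DecidableEq Γ]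
  {R : Type*} [CommRing R] [IsDomain R] (𝒜 : Γ → AddSubgroup R) [GradedRing 𝒜]
  (K : Type*) [Field K] [Algebra R K] [IsFractionRing R K] (s : HomStarOp 𝒜 K)
  {A : FractionalIdeal R⁰ K}

def eStarTerm (z : K) (A : FractionalIdeal R⁰ K) : FractionalIdeal R⁰ K :=
  spanSingleton R⁰ z⁻¹ * s.toFun (Cfrac 𝒜 K (spanSingleton R⁰ z * A))

theorem eStarSub_eq_iInf (A : FractionalIdeal R⁰ K) :
    eStarSub 𝒜 K s A = ⨅ z ∈ eStarIndex A, (eStarTerm 𝒜 K s z A : Submodule R K) :=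
  rfl

theorem coe_eStar (A : FractionalIdeal R⁰ K) :
    (eStar 𝒜 K s A : Submodule R K) = eStarSub 𝒜 K s A := by
  obtain ⟨z, hz⟩ := nonempty_eStarIndex A
  have hfrac : IsFractional R⁰ (eStarSub 𝒜 K s A) :=
    isFractional_of_le (J := eStarTerm 𝒜 K s z A) (biInf_le _ hz)
  have h : eStar 𝒜 K s A = ⟨_, hfrac⟩ := dif_pos hfrac
  rw [h]
  rfl

theorem le_eStar_iff {J : FractionalIdeal R⁰ K} :
    J ≤ eStar 𝒜 K s A ↔ ∀ z ∈ eStarIndex A, J ≤ eStarTerm 𝒜 K s z A := by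
  simp only [← coe_le_coe, coe_eStar, eStarSub_eq_iInf, le_iInf_iff]

theorem eStar_le_eStarTerm {z : K} (hz : z ∈ eStarIndex A) :
    eStar 𝒜 K s A ≤ eStarTerm 𝒜 K s z A :=
  (le_eStar_iff 𝒜 K s).mp le_rfl z hz

theorem le_eStarTerm (hA : A ≠ 0) {z : K} (hz : z ∈ eStarIndex A) :
    A ≤ eStarTerm 𝒜 K s z A := by
  obtain ⟨hz0, hz1⟩ := hz
  rw [eStarTerm, le_spanSingleton_inv_mul_iff hz0]
  calc spanSingleton R⁰ z * A
      ≤ Cfrac 𝒜 K (spanSingleton R⁰ z * A) := le_Cfrac 𝒜 K hz1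
    _ ≤ _ := s.le_star _ (Cfrac_ne_zero 𝒜 K (spanSingleton_mul_ne_zero hz0 hA) hz1)
        (isHomFrac_Cfrac 𝒜 K _)

theorem le_eStar (hA : A ≠ 0) : A ≤ eStar 𝒜 K s A :=
  (le_eStar_iff 𝒜 K s).mpr fun _ hz => le_eStarTerm 𝒜 K s hA hz

theorem eStar_ne_zero (hA : A ≠ 0) : eStar 𝒜 K s A ≠ 0 :=
  fun h => hA (le_antisymm (h ▸ le_eStar 𝒜 K s hA) (zero_le _))

theorem eStar_spanSingleton {x : K} (hx : x ≠ 0) :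
    eStar 𝒜 K s (spanSingleton R⁰ x) = spanSingleton R⁰ x := by
  have hx' : spanSingleton R⁰ x⁻¹ * spanSingleton R⁰ x = 1 := by
    rw [spanSingleton_mul_spanSingleton, inv_mul_cancel₀ hx, spanSingleton_one]
  have hterm : eStarTerm 𝒜 K s x⁻¹ (spanSingleton R⁰ x) = spanSingleton R⁰ x := by
    rw [eStarTerm, hx', Cfrac_one, s.toFun_one, inv_inv, mul_one]
  refine le_antisymm ?_ (le_eStar 𝒜 K s (spanSingleton_ne_zero_iff.mpr hx))
  exact (eStar_le_eStarTerm 𝒜 K s ⟨inv_ne_zero hx, hx'.le⟩).trans hterm.le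

theorem eStar_mono {B : FractionalIdeal R⁰ K} (hA : A ≠ 0) (hAB : A ≤ B) :
    eStar 𝒜 K s A ≤ eStar 𝒜 K s B := by
  refine (le_eStar_iff 𝒜 K s).mpr fun z ⟨hz0, hzB⟩ => ?_
  have hzA : spanSingleton R⁰ z * A ≤ spanSingleton R⁰ z * B := mul_le_mul_right hAB _
  have hB : B ≠ 0 := ne_bot_of_le_ne_bot hA hAB
  refine (eStar_le_eStarTerm 𝒜 K s ⟨hz0, hzA.trans hzB⟩).trans (mul_le_mul_right ?_ _)
  exact s.mono _ _ (Cfrac_ne_zero 𝒜 K (spanSingleton_mul_ne_zero hz0 hA) (hzA.trans hzB))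
    (Cfrac_ne_zero 𝒜 K (spanSingleton_mul_ne_zero hz0 hB) hzB)
    (isHomFrac_Cfrac 𝒜 K _) (isHomFrac_Cfrac 𝒜 K _) (Cfrac_mono 𝒜 K hzA)

theorem eStarTerm_spanSingleton_mul {x w : K} (hx : x ≠ 0) (A : FractionalIdeal R⁰ K) :
    eStarTerm 𝒜 K s w (spanSingleton R⁰ x * A) =
      spanSingleton R⁰ x * eStarTerm 𝒜 K s (w * x) A := by
  rw [eStarTerm, eStarTerm, ← mul_assoc (spanSingleton R⁰ w), ← mul_assoc,
    spanSingleton_mul_spanSingleton, spanSingleton_mul_spanSingleton, mul_inv, mul_comm w⁻¹,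
    mul_inv_cancel_left₀ hx]

theorem spanSingleton_mul_eStar_le {x : K} (hx : x ≠ 0) (A : FractionalIdeal R⁰ K) :
    spanSingleton R⁰ x * eStar 𝒜 K s A ≤ eStar 𝒜 K s (spanSingleton R⁰ x * A) := by
  refine (le_eStar_iff 𝒜 K s).mpr fun w hw => ?_
  rw [eStarTerm_spanSingleton_mul 𝒜 K s hx]
  exact mul_le_mul_right (eStar_le_eStarTerm 𝒜 K s
    ((mem_eStarIndex_spanSingleton_mul_iff hx).mp hw)) _

theorem eStar_spanSingleton_mul {x : K} (hx : x ≠ 0) (A : FractionalIdeal R⁰ K) :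
    eStar 𝒜 K s (spanSingleton R⁰ x * A) = spanSingleton R⁰ x * eStar 𝒜 K s A := by
  refine le_antisymm ?_ (spanSingleton_mul_eStar_le 𝒜 K s hx A)
  have h := spanSingleton_mul_eStar_le 𝒜 K s (inv_ne_zero hx) (spanSingleton R⁰ x * A)
  rw [spanSingleton_inv_mul_spanSingleton_mul hx] at h
  simpa only [inv_inv] using (le_spanSingleton_inv_mul_iff (inv_ne_zero hx)).mpr h

theorem eStar_eStar (hA : A ≠ 0) : eStar 𝒜 K s (eStar 𝒜 K s A) = eStar 𝒜 K s A := by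
  refine le_antisymm ((le_eStar_iff 𝒜 K s).mpr fun z hz => ?_)
    (le_eStar 𝒜 K s (eStar_ne_zero 𝒜 K s hA))
  obtain ⟨hz0, hz1⟩ := hz
  set C := Cfrac 𝒜 K (spanSingleton R⁰ z * A)
  have hC0 : C ≠ 0 := Cfrac_ne_zero 𝒜 K (spanSingleton_mul_ne_zero hz0 hA) hz1
  have hC := isHomFrac_Cfrac 𝒜 K (spanSingleton R⁰ z * A)
  have hB0 := s.toFun_ne_zero hC0 hC
  have hB := s.hom C hC0 hC
  have hB1 := s.toFun_le_one hC0 hC (Cfrac_le_one 𝒜 K _)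
  have hzE : spanSingleton R⁰ z * eStar 𝒜 K s A ≤ s.toFun C :=
    (le_spanSingleton_inv_mul_iff hz0).mp (eStar_le_eStarTerm 𝒜 K s ⟨hz0, hz1⟩)
  have hCE : Cfrac 𝒜 K (spanSingleton R⁰ z * eStar 𝒜 K s A) ≤ s.toFun C :=
    (Cfrac_mono 𝒜 K hzE).trans (Cfrac_le_self 𝒜 K hB1 (isHomIdeal_idealOf 𝒜 K hB1 hB))
  refine (eStar_le_eStarTerm 𝒜 K s ⟨hz0, hzE.trans hB1⟩).trans (mul_le_mul_right ?_ _)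
  calc s.toFun (Cfrac 𝒜 K (spanSingleton R⁰ z * eStar 𝒜 K s A))
      ≤ s.toFun (s.toFun C) := s.mono _ _ (Cfrac_ne_zero 𝒜 K
        (spanSingleton_mul_ne_zero hz0 (eStar_ne_zero 𝒜 K s hA)) (hzE.trans hB1)) hB0
        (isHomFrac_Cfrac 𝒜 K _) hB hCE
    _ = s.toFun C := s.idem C hC0 hC

end EStar

/-- `e(⋆)` is a classical star operation on `R`. -/
theorem stmt_1
    {Γ : Type*} [AddCommMonoid Γ] [LinearOrder Γ] [IsOrderedCancelAddMonoid Γ] [DecidableEq Γ]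
    {R : Type*} [CommRing R] [IsDomain R]
    (𝒜 : Γ → AddSubgroup R) [GradedRing 𝒜]
    (K : Type*) [Field K] [Algebra R K] [IsFractionRing R K]
    (s : HomStarOp 𝒜 K) :
    (∀ x : K, x ≠ 0 →
      eStar 𝒜 K s (spanSingleton (nonZeroDivisors R) x) = spanSingleton (nonZeroDivisors R) x) ∧
    (∀ x : K, x ≠ 0 → ∀ A : FractionalIdeal (nonZeroDivisors R) K, A ≠ 0 →
      eStar 𝒜 K s (spanSingleton (nonZeroDivisors R) x * A) =
        spanSingleton (nonZeroDivisors R) x * eStar 𝒜 K s A) ∧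
    (∀ A : FractionalIdeal (nonZeroDivisors R) K, A ≠ 0 → A ≤ eStar 𝒜 K s A) ∧
    (∀ A B : FractionalIdeal (nonZeroDivisors R) K, A ≠ 0 → B ≠ 0 → A ≤ B →
      eStar 𝒜 K s A ≤ eStar 𝒜 K s B) ∧
    (∀ A : FractionalIdeal (nonZeroDivisors R) K, A ≠ 0 →
      eStar 𝒜 K s (eStar 𝒜 K s A) = eStar 𝒜 K s A) :=
  ⟨fun _ hx => eStar_spanSingleton 𝒜 K s hx,
    fun _ hx A _ => eStar_spanSingleton_mul 𝒜 K s hx A,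
    fun _ hA => le_eStar 𝒜 K s hA,
    fun _ _ hA _ hAB => eStar_mono 𝒜 K s hA hAB,
    fun _ hA => eStar_eStar 𝒜 K s hA⟩
end

section
/- Let R be a Γ-graded integral domain and ★ : F(R) → F(R) a classical star operation on R. Define, for each F ∈ F(R), F^{★̄} := ⋃ { (F : I) : I is a nonzero integral ideal of R with I^★ = R }. Then for every homogeneous fractional ideal A of R, A^{★̄} is again a homogeneous fractional ideal; i.e., the stable star operation ★̄ associated to ★ is homogeneous preserving. -/
/-!
An element `x` lies in `A^{★̄}` iff `x I ⊆ A` for an ideal `I` with `I^★ = R`, and these ideals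
are closed under products and enlargement. Clearing denominators by a homogeneous `t` with
`tA = I₀` a homogeneous ideal, homogeneity of `A^{★̄}` reduces to: if `f I ⊆ I₀`, then every
homogeneous component `f_γ` satisfies `f_γ J ⊆ I₀` for such a `J`. This follows from the
Dedekind–Mertens type inclusion `f_γ C(I)^{n+1} ⊆ I₀ C(I)^n`, where `n` is the number of
components of `f` and `C(I) ⊇ I` is the homogeneous hull: take `J = C(I)^{n+1} ⊇ I^{n+1}`.
-/

open FractionalIdeal
open scoped Classical

/-- The stable closure `F^{★̄} = ⋃ { (F : I) : I nonzero integral ideal, I^★ = R }`. -/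
def starBarSet {R : Type*} [CommRing R] [IsDomain R]
    (K : Type*) [Field K] [Algebra R K] [IsFractionRing R K]
    (t : FractionalIdeal (nonZeroDivisors R) K → FractionalIdeal (nonZeroDivisors R) K)
    (F : FractionalIdeal (nonZeroDivisors R) K) : Set K :=
  ⋃ I ∈ {I : Ideal R | I ≠ 0 ∧ t (↑I : FractionalIdeal (nonZeroDivisors R) K) = 1},
    {x : K | ∀ i ∈ I, x * algebraMap R K i ∈ F}

theorem Ideal.span_mul_le_of_forall {R : Type*} [CommRing R] {S : Set R} {X M : Ideal R}
    (h : ∀ s ∈ S, Ideal.span {s} * X ≤ M) : Ideal.span S * X ≤ M := by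
  have hcolon : Ideal.span S ≤ M.colon X := Ideal.span_le.2 fun s hs =>
    Submodule.mem_colon.2 fun x hx =>
      h s hs (Ideal.mul_mem_mul (Ideal.mem_span_singleton_self s) hx)
  exact Ideal.mul_le.2 fun r hr x hx => Submodule.mem_colon.1 (hcolon hr) x hx

section Decompose

open DirectSum

variable {Γ R σ : Type*} [AddMonoid Γ] [DecidableEq Γ] [CommRing R] [SetLike σ R]
  [AddSubgroupClass σ R] (𝒜 : Γ → σ) [GradedRing 𝒜]

theorem coe_decompose_sub_decompose_apply (f : R) (α γ : Γ) :
    (decompose 𝒜 (f - decompose 𝒜 f α) γ : R) = if γ = α then 0 else decompose 𝒜 f γ := by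
  rw [decompose_sub, DFinsupp.sub_apply, AddSubgroupClass.coe_sub]
  split_ifs with h
  · subst h
    rw [decompose_of_mem_same 𝒜 (SetLike.coe_mem _), sub_self, ZeroMemClass.coe_zero]
  · rw [decompose_of_mem_ne 𝒜 (SetLike.coe_mem _) (Ne.symm h), sub_zero]

theorem support_decompose_sub_decompose (f : R) (α : Γ) :
    (decompose 𝒜 (f - decompose 𝒜 f α)).support = (decompose 𝒜 f).support.erase α := by
  ext γ
  simp only [Finset.mem_erase, GradedRing.mem_support_iff, GradedRing.proj_apply,
    coe_decompose_sub_decompose_apply]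
  split_ifs with h <;> simp [h]

theorem coe_decompose_mul_apply (f g : R) (n : Γ) :
    (decompose 𝒜 (f * g) n : R) = ∑ p ∈ (decompose 𝒜 f).support ×ˢ (decompose 𝒜 g).support
      with p.1 + p.2 = n, (decompose 𝒜 f p.1 : R) * decompose 𝒜 g p.2 := by
  rw [decompose_mul, coe_mul_apply]

end Decompose

theorem Finset.card_filter_lt_lt_card_filter_lt {α : Type*} [LinearOrder α] {s : Finset α}
    {β δ : α} (hδ : δ ∈ s) (hβδ : β < δ) : (s.filter (δ < ·)).card < (s.filter (β < ·)).card := by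
  refine Finset.card_lt_card ⟨fun x hx => ?_, fun h => ?_⟩
  · simp only [Finset.mem_filter] at hx ⊢
    exact ⟨hx.1, hβδ.trans hx.2⟩
  · simpa using h (Finset.mem_filter.2 ⟨hδ, hβδ⟩)

section DedekindMertens

open DirectSum

variable {Γ R σ : Type*} [AddCommMonoid Γ] [LinearOrder Γ] [IsOrderedCancelAddMonoid Γ]
  [DecidableEq Γ] [CommRing R] [SetLike σ R] [AddSubgroupClass σ R] (𝒜 : Γ → σ) [GradedRing 𝒜]

-- Downward induction on `β`: `(f i)_{α+β}` is `f_α i_β` plus terms `f_γ i_δ` with `γ < α`,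
-- hence `β < δ`.
theorem span_top_mul_decompose_mul_le {f i : R} {α : Γ}
    (hα : ∀ γ ∈ (decompose 𝒜 f).support, γ ≤ α) {P M N : Ideal R}
    (hfi : ∀ δ, Ideal.span {(decompose 𝒜 (f * i) δ : R)} * P ≤ M)
    (hlow : ∀ γ ≠ α, Ideal.span {(decompose 𝒜 f γ : R)} * P ≤
      N ⊔ Ideal.span {(decompose 𝒜 f α : R)} * P)
    (hN : ∀ δ, Ideal.span {(decompose 𝒜 i δ : R)} * N ≤ M) (β : Γ) :
    Ideal.span {(decompose 𝒜 f α : R) * decompose 𝒜 i β} * P ≤ M := by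
  induction hk : ((decompose 𝒜 i).support.filter (β < ·)).card
    using Nat.strong_induction_on generalizing β with
  | _ k ih =>
  set S := (decompose 𝒜 f).support ×ˢ (decompose 𝒜 i).support with hS
  have hterm : ∀ p ∈ S, p.1 + p.2 = α + β → p ≠ (α, β) →
      Ideal.span {(decompose 𝒜 f p.1 : R) * decompose 𝒜 i p.2} * P ≤ M := by
    rintro ⟨γ, δ⟩ hp hsum hne
    simp only [hS, Finset.mem_product] at hp hsum
    have hγ : γ < α := (hα γ hp.1).lt_of_ne fun h => hne (by subst h; simp [add_left_cancel hsum])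
    have hβδ : β < δ := lt_of_not_ge fun h => (add_lt_add_of_lt_of_le hγ h).ne hsum
    have hcard := hk ▸ Finset.card_filter_lt_lt_card_filter_lt hp.2 hβδ
    calc Ideal.span {(decompose 𝒜 f γ : R) * decompose 𝒜 i δ} * P
        = Ideal.span {(decompose 𝒜 i δ : R)} * (Ideal.span {(decompose 𝒜 f γ : R)} * P) := by
          rw [← Ideal.span_singleton_mul_span_singleton, mul_comm (Ideal.span {_}), mul_assoc]
      _ ≤ Ideal.span {(decompose 𝒜 i δ : R)} * (N ⊔ Ideal.span {(decompose 𝒜 f α : R)} * P) :=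
          Ideal.mul_mono_right (hlow γ hγ.ne)
      _ = Ideal.span {(decompose 𝒜 i δ : R)} * N ⊔
            Ideal.span {(decompose 𝒜 f α : R) * decompose 𝒜 i δ} * P := by
          rw [Ideal.mul_sup, ← mul_assoc, Ideal.span_singleton_mul_span_singleton, mul_comm (_ : R)]
      _ ≤ M := sup_le (hN δ) (ih _ hcard δ rfl)
  rw [Ideal.span_singleton_mul_le_iff]
  intro x hx
  by_cases hmem : (α, β) ∈ S
  · have hsplit := Finset.add_sum_erase (S.filter fun p => p.1 + p.2 = α + β)
      (fun p : Γ × Γ => (decompose 𝒜 f p.1 : R) * decompose 𝒜 i p.2)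
      (Finset.mem_filter.2 ⟨hmem, rfl⟩)
    rw [← coe_decompose_mul_apply] at hsplit
    have htotal := hfi (α + β) (Ideal.mul_mem_mul (Ideal.mem_span_singleton_self _) hx)
    rw [← hsplit, add_mul, Finset.sum_mul] at htotal
    refine (Submodule.add_mem_iff_left _ (Ideal.sum_mem _ fun p hp => ?_)).1 htotal
    obtain ⟨hne, hp⟩ := Finset.mem_erase.1 hp
    obtain ⟨hpS, hsum⟩ := Finset.mem_filter.1 hp
    exact hterm p hpS hsum hne (Ideal.mul_mem_mul (Ideal.mem_span_singleton_self _) hx)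
  · have hzero : (decompose 𝒜 f α : R) * decompose 𝒜 i β = 0 := by
      rw [hS, Finset.mem_product, not_and_or, DFinsupp.notMem_support_iff,
        DFinsupp.notMem_support_iff] at hmem
      rcases hmem with h | h <;> simp [h]
    rw [hzero, zero_mul]
    exact M.zero_mem

theorem span_top_mul_homogeneousHull_pow_le {L I : Ideal R} (hL : L.IsHomogeneous 𝒜) {f : R}
    (hf : ∀ i ∈ I, f * i ∈ L) {α : Γ} (hα : ∀ γ ∈ (decompose 𝒜 f).support, γ ≤ α) {n : ℕ}
    (hlow : ∀ γ ≠ α, Ideal.span {(decompose 𝒜 f γ : R)} * (I.homogeneousHull 𝒜).toIdeal ^ (n + 1) ≤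
      L * (I.homogeneousHull 𝒜).toIdeal ^ n ⊔
        Ideal.span {(decompose 𝒜 f α : R)} * (I.homogeneousHull 𝒜).toIdeal ^ (n + 1)) :
    Ideal.span {(decompose 𝒜 f α : R)} * (I.homogeneousHull 𝒜).toIdeal ^ (n + 1 + 1) ≤
      L * (I.homogeneousHull 𝒜).toIdeal ^ (n + 1) := by
  rw [pow_succ' _ (n + 1), mul_left_comm]
  refine Ideal.span_mul_le_of_forall ?_
  rintro _ ⟨β, ⟨i, hi⟩, rfl⟩
  rw [← mul_assoc, Ideal.span_singleton_mul_span_singleton, mul_comm _ (decompose 𝒜 f α : R)]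
  refine span_top_mul_decompose_mul_le 𝒜 (i := i) hα (fun δ => ?_) hlow (fun δ => ?_) β
  · exact Ideal.mul_mono_left (Ideal.span_singleton_le_iff_mem _ |>.2 (hL δ (hf i hi)))
  · rw [mul_left_comm, pow_succ']
    exact Ideal.mul_mono_right (Ideal.mul_mono_left
      (Ideal.span_singleton_le_iff_mem _ |>.2 (Ideal.subset_span ⟨δ, ⟨i, hi⟩, rfl⟩)))

-- A Dedekind–Mertens inclusion. The induction step splits off the top component `a` of `f`:
-- `(f - a) I ⊆ L + a C(I)`, which is again homogeneous.
theorem span_decompose_mul_homogeneousHull_pow_le {L I : Ideal R} (hL : L.IsHomogeneous 𝒜)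
    {f : R} (hf : ∀ i ∈ I, f * i ∈ L) {n : ℕ} (hn : (decompose 𝒜 f).support.card ≤ n) (γ : Γ) :
    Ideal.span {(decompose 𝒜 f γ : R)} * (I.homogeneousHull 𝒜).toIdeal ^ (n + 1) ≤
      L * (I.homogeneousHull 𝒜).toIdeal ^ n := by
  set C := (I.homogeneousHull 𝒜).toIdeal
  induction n generalizing f L γ with
  | zero =>
    have : decompose 𝒜 f γ = 0 := by
      rw [← DFinsupp.notMem_support_iff, Finset.card_eq_zero.1 (Nat.le_zero.1 hn)]
      exact Finset.notMem_empty γ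
    simp [this]
  | succ n ih =>
    by_cases hγsupp : γ ∉ (decompose 𝒜 f).support
    · simp [DFinsupp.notMem_support_iff.1 hγsupp]
    have hne : (decompose 𝒜 f).support.Nonempty := ⟨γ, not_not.1 hγsupp⟩
    set α := (decompose 𝒜 f).support.max' hne
    have hα : ∀ γ ∈ (decompose 𝒜 f).support, γ ≤ α := fun γ hγ => Finset.le_max' _ γ hγ
    set a : R := ↑(decompose 𝒜 f α)
    have hL' : (L ⊔ Ideal.span {a} * C).IsHomogeneous 𝒜 :=
      hL.sup ((Ideal.homogeneous_span 𝒜 _ (by simpa using ⟨α, SetLike.coe_mem _⟩)).mul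
        (Ideal.homogeneousHull 𝒜 I).isHomogeneous)
    have hf' : ∀ i ∈ I, (f - a) * i ∈ L ⊔ Ideal.span {a} * C := fun i hi => by
      rw [sub_mul]
      exact Submodule.sub_mem _ (Submodule.mem_sup_left (hf i hi)) (Submodule.mem_sup_right
        (Ideal.mul_mem_mul (Ideal.mem_span_singleton_self a)
          (Ideal.le_toIdeal_homogeneousHull 𝒜 I hi)))
    have hcard : (decompose 𝒜 (f - a)).support.card ≤ n := by
      rw [support_decompose_sub_decompose, Finset.card_erase_of_mem (Finset.max'_mem _ hne)]
      omega
    have hlow : ∀ γ ≠ α, Ideal.span {(decompose 𝒜 f γ : R)} * C ^ (n + 1) ≤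
        L * C ^ n ⊔ Ideal.span {a} * C ^ (n + 1) := fun γ hγ => by
      have := ih hL' hf' hcard γ
      rwa [coe_decompose_sub_decompose_apply, if_neg hγ, Ideal.sup_mul, mul_assoc,
        ← pow_succ'] at this
    have htop := span_top_mul_homogeneousHull_pow_le 𝒜 hL hf hα hlow
    by_cases hγ : γ = α
    · rw [hγ]
      exact htop
    · calc Ideal.span {(decompose 𝒜 f γ : R)} * C ^ (n + 1 + 1)
          = Ideal.span {(decompose 𝒜 f γ : R)} * C ^ (n + 1) * C := by rw [pow_succ, mul_assoc]
        _ ≤ (L * C ^ n ⊔ Ideal.span {a} * C ^ (n + 1)) * C := Ideal.mul_mono_left (hlow γ hγ)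
        _ = L * C ^ (n + 1) ⊔ Ideal.span {a} * C ^ (n + 1 + 1) := by
          rw [Ideal.sup_mul, mul_assoc, mul_assoc, ← pow_succ, ← pow_succ]
        _ ≤ L * C ^ (n + 1) := sup_le le_rfl htop

end DedekindMertens

theorem isHomIdeal_iff_s5 {Γ R : Type*} [AddCommMonoid Γ] [DecidableEq Γ] [CommRing R]
    {𝒜 : Γ → AddSubgroup R} [GradedRing 𝒜] {I : Ideal R} :
    IsHomIdeal 𝒜 I ↔ I.IsHomogeneous 𝒜 :=
  ⟨fun h γ _ hf => h _ hf γ, fun h _ hf γ => h γ hf⟩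

theorem mem_idealOf_spanSingleton_mul {R K : Type*} [CommRing R] [Field K] [Algebra R K]
    [IsFractionRing R K] {t : K} (ht : t ≠ 0)
    {F : FractionalIdeal (nonZeroDivisors R) K} {r : R} :
    r ∈ idealOf K (spanSingleton (nonZeroDivisors R) t * F) ↔ t⁻¹ * algebraMap R K r ∈ F := by
  rw [idealOf, Submodule.mem_comap, Algebra.linearMap_apply, mem_coe, mem_singleton_mul]
  exact ⟨fun ⟨y, hy, hr⟩ => by rwa [hr, inv_mul_cancel_left₀ ht],
    fun h => ⟨_, h, (mul_inv_cancel_left₀ ht _).symm⟩⟩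

namespace StarOp

variable {R K : Type*} [CommRing R] [IsDomain R] [Field K] [Algebra R K] [IsFractionRing R K]
  (s : StarOp R K)

def localizingSystem : Set (Ideal R) :=
  {I | I ≠ 0 ∧ s.toFun (I : FractionalIdeal (nonZeroDivisors R) K) = 1}

theorem map_one : s.toFun 1 = 1 := by
  simpa using s.map_span 1 one_ne_zero

theorem map_le_one {J : FractionalIdeal (nonZeroDivisors R) K} (hJ : J ≠ 0) (h : J ≤ 1) :
    s.toFun J ≤ 1 :=
  s.map_one ▸ s.mono J 1 hJ one_ne_zero h

variable {s}

theorem coeIdeal_ne_zero_of_mem_localizingSystem {I : Ideal R} (hI : I ∈ s.localizingSystem) :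
    (I : FractionalIdeal (nonZeroDivisors R) K) ≠ 0 :=
  coeIdeal_ne_zero.2 hI.1

theorem mem_map_of_forall_mul_mem {I : Ideal R} (hI : I ∈ s.localizingSystem)
    {F : FractionalIdeal (nonZeroDivisors R) K} {w : K}
    (h : ∀ i ∈ I, w * algebraMap R K i ∈ F) : w ∈ s.toFun F := by
  -- `w I ⊆ F`, hence `w = w I^★ ⊆ F^★`.
  by_cases hw : w = 0
  · rw [hw]
    exact zero_mem _
  have hI0 := coeIdeal_ne_zero_of_mem_localizingSystem hI
  have hle : spanSingleton (nonZeroDivisors R) w * I ≤ F := by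
    refine spanSingleton_mul_le_iff.2 fun z hz => ?_
    obtain ⟨i, hi, rfl⟩ := (mem_coeIdeal _).1 hz
    exact h i hi
  have hne : spanSingleton (nonZeroDivisors R) w * I ≠ 0 := by
    obtain ⟨i, hi, hi0⟩ := Submodule.exists_mem_ne_zero_of_ne_bot hI.1
    intro h0
    have hmem := mul_mem_mul (mem_spanSingleton_self (nonZeroDivisors R) w)
      (mem_coeIdeal_of_mem (nonZeroDivisors R) hi)
    rw [h0, mem_zero_iff] at hmem
    exact mul_ne_zero hw ((map_ne_zero_iff _ (IsFractionRing.injective R K)).2 hi0) hmem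
  have hF : F ≠ 0 := fun hF => hne (FractionalIdeal.le_zero_iff.1 (hF ▸ hle))
  have hmono := s.mono _ _ hne hF hle
  rw [s.map_smul w hw _ hI0, hI.2, mul_one] at hmono
  exact spanSingleton_le_iff_mem.1 hmono

theorem top_mem_localizingSystem : ⊤ ∈ s.localizingSystem :=
  ⟨by simp, by rw [coeIdeal_top, s.map_one]⟩

theorem mem_localizingSystem_of_le {I J : Ideal R} (hI : I ∈ s.localizingSystem) (hIJ : I ≤ J) :
    J ∈ s.localizingSystem := by
  have hJ : (J : FractionalIdeal (nonZeroDivisors R) K) ≠ 0 :=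
    coeIdeal_ne_zero.2 (ne_bot_of_le_ne_bot hI.1 hIJ)
  refine ⟨coeIdeal_ne_zero.1 hJ, le_antisymm (s.map_le_one hJ coeIdeal_le_one) ?_⟩
  rw [← hI.2]
  exact s.mono _ _ (coeIdeal_ne_zero_of_mem_localizingSystem hI) hJ
    (coeIdeal_le_coeIdeal _ |>.2 hIJ)

theorem mul_mem_localizingSystem {I J : Ideal R} (hI : I ∈ s.localizingSystem)
    (hJ : J ∈ s.localizingSystem) : I * J ∈ s.localizingSystem := by
  have hIJ : ((I * J : Ideal R) : FractionalIdeal (nonZeroDivisors R) K) ≠ 0 :=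
    coeIdeal_ne_zero.2 (mul_ne_zero hI.1 hJ.1)
  have hJle : (J : FractionalIdeal (nonZeroDivisors R) K) ≤ s.toFun ↑(I * J) := fun x hx => by
    obtain ⟨j, hj, rfl⟩ := (mem_coeIdeal _).1 hx
    refine mem_map_of_forall_mul_mem hI fun i hi => ?_
    rw [← map_mul, mul_comm j i]
    exact mem_coeIdeal_of_mem _ (Ideal.mul_mem_mul hi hj)
  refine ⟨coeIdeal_ne_zero.1 hIJ, le_antisymm (s.map_le_one hIJ coeIdeal_le_one) ?_⟩
  rw [← hJ.2, ← s.idem _ hIJ]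
  refine s.mono _ _ (coeIdeal_ne_zero_of_mem_localizingSystem hJ) (fun h => hIJ ?_) hJle
  exact FractionalIdeal.le_zero_iff.1 (h ▸ s.le_star _ hIJ)

theorem pow_mem_localizingSystem {I : Ideal R} (hI : I ∈ s.localizingSystem) (k : ℕ) :
    I ^ k ∈ s.localizingSystem := by
  induction k with
  | zero => simpa using top_mem_localizingSystem
  | succ k ih => exact pow_succ I k ▸ mul_mem_localizingSystem ih hI

theorem mem_starBarSet {A : FractionalIdeal (nonZeroDivisors R) K} {x : K} :
    x ∈ starBarSet K s.toFun A ↔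
      ∃ I ∈ s.localizingSystem, ∀ i ∈ I, x * algebraMap R K i ∈ A := by
  simp only [starBarSet, Set.mem_iUnion, Set.mem_ofPred_eq, exists_prop]
  rfl

variable (s) in
def starBarSubmodule (A : FractionalIdeal (nonZeroDivisors R) K) : Submodule R K where
  carrier := starBarSet K s.toFun A
  zero_mem' := mem_starBarSet.2 ⟨⊤, top_mem_localizingSystem, fun i _ => by
    rw [zero_mul]
    exact zero_mem A⟩
  add_mem' := by
    intro x y hx hy
    obtain ⟨I, hI, hx⟩ := mem_starBarSet.1 hx
    obtain ⟨J, hJ, hy⟩ := mem_starBarSet.1 hy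
    refine mem_starBarSet.2 ⟨I * J, mul_mem_localizingSystem hI hJ, fun i hi => ?_⟩
    rw [add_mul]
    exact Submodule.add_mem (A : Submodule R K) (hx i (Ideal.mul_le_left hi))
      (hy i (Ideal.mul_le_right hi))
  smul_mem' := by
    intro c x hx
    obtain ⟨I, hI, hx⟩ := mem_starBarSet.1 hx
    refine mem_starBarSet.2 ⟨I, hI, fun i hi => ?_⟩
    rw [smul_mul_assoc]
    exact Submodule.smul_mem _ c (hx i hi)

variable (s) in
def starBar (A : FractionalIdeal (nonZeroDivisors R) K) : FractionalIdeal (nonZeroDivisors R) K :=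
  ⟨s.starBarSubmodule A, isFractional_of_le (J := s.toFun A) fun _ hx =>
    have ⟨_, hI, hx⟩ := mem_starBarSet.1 hx
    mem_map_of_forall_mul_mem hI hx⟩

theorem mem_starBar {A : FractionalIdeal (nonZeroDivisors R) K} {x : K} :
    x ∈ s.starBar A ↔ ∃ I ∈ s.localizingSystem, ∀ i ∈ I, x * algebraMap R K i ∈ A :=
  mem_starBarSet

theorem le_starBar (A : FractionalIdeal (nonZeroDivisors R) K) : A ≤ s.starBar A :=
  fun x hx => mem_starBar.2 ⟨⊤, top_mem_localizingSystem, fun i _ => by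
    rw [mul_comm, ← Algebra.smul_def]
    exact Submodule.smul_mem _ i hx⟩

theorem starBar_ne_zero {A : FractionalIdeal (nonZeroDivisors R) K} (hA : A ≠ 0) :
    s.starBar A ≠ 0 :=
  fun h => hA (FractionalIdeal.le_zero_iff.1 (h ▸ s.le_starBar A))

theorem spanSingleton_mul_starBar_le_one {A : FractionalIdeal (nonZeroDivisors R) K} {t : K}
    (h : spanSingleton (nonZeroDivisors R) t * A ≤ 1) :
    spanSingleton (nonZeroDivisors R) t * s.starBar A ≤ 1 := by
  refine spanSingleton_mul_le_iff.2 fun y hy => ?_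
  obtain ⟨I, hI, hy⟩ := mem_starBar.1 hy
  rw [← s.map_one]
  refine mem_map_of_forall_mul_mem hI fun i hi => ?_
  rw [mul_assoc]
  exact h (mul_mem_mul (mem_spanSingleton_self _ t) (hy i hi))

theorem mem_idealOf_spanSingleton_mul_starBar {A : FractionalIdeal (nonZeroDivisors R) K}
    {t : K} (ht : t ≠ 0) {r : R} :
    r ∈ idealOf K (spanSingleton (nonZeroDivisors R) t * s.starBar A) ↔
      ∃ I ∈ s.localizingSystem, ∀ i ∈ I,
        r * i ∈ idealOf K (spanSingleton (nonZeroDivisors R) t * A) := by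
  simp only [mem_idealOf_spanSingleton_mul ht, mem_starBar, map_mul, mul_assoc]

theorem exists_mem_localizingSystem_decompose_mul_mem {Γ : Type*} [AddCommMonoid Γ]
    [LinearOrder Γ] [IsOrderedCancelAddMonoid Γ] [DecidableEq Γ] (𝒜 : Γ → AddSubgroup R)
    [GradedRing 𝒜] {I₀ : Ideal R} (h₀ : I₀.IsHomogeneous 𝒜) {f : R}
    (hf : ∃ I ∈ s.localizingSystem, ∀ i ∈ I, f * i ∈ I₀) (γ : Γ) :
    ∃ J ∈ s.localizingSystem, ∀ j ∈ J, (DirectSum.decompose 𝒜 f γ : R) * j ∈ I₀ := by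
  obtain ⟨I, hI, hf⟩ := hf
  set n := (DirectSum.decompose 𝒜 f).support.card
  refine ⟨(I.homogeneousHull 𝒜).toIdeal ^ (n + 1), mem_localizingSystem_of_le
    (pow_mem_localizingSystem hI (n + 1))
    (Ideal.pow_right_mono (I.le_toIdeal_homogeneousHull 𝒜) _), fun j hj => ?_⟩
  exact Ideal.mul_le_left (span_decompose_mul_homogeneousHull_pow_le 𝒜 h₀ hf le_rfl γ
    (Ideal.mul_mem_mul (Ideal.mem_span_singleton_self _) hj))

end StarOp

/-- the stable star operation `★̄` associated to a classical star operation is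
homogeneous preserving. -/
theorem stmt_5
    {Γ : Type*} [AddCommMonoid Γ] [LinearOrder Γ] [IsOrderedCancelAddMonoid Γ] [DecidableEq Γ]
    {R : Type*} [CommRing R] [IsDomain R]
    (𝒜 : Γ → AddSubgroup R) [GradedRing 𝒜]
    (K : Type*) [Field K] [Algebra R K] [IsFractionRing R K]
    (s : StarOp R K) (A : FractionalIdeal (nonZeroDivisors R) K)
    (hA : A ≠ 0) (hhom : IsHomFrac 𝒜 K A) :
    ∃ B : FractionalIdeal (nonZeroDivisors R) K, B ≠ 0 ∧ IsHomFrac 𝒜 K B ∧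
      {x : K | x ∈ B} = starBarSet K s.toFun A := by
  obtain ⟨t, ht, hthom, htA, hA₀⟩ := hhom
  have ht' : algebraMap R K t ≠ 0 := (map_ne_zero_iff _ (IsFractionRing.injective R K)).2 ht
  refine ⟨s.starBar A, StarOp.starBar_ne_zero hA,
    ⟨t, ht, hthom, StarOp.spanSingleton_mul_starBar_le_one htA, ?_⟩, rfl⟩
  rw [isHomIdeal_iff_s5] at hA₀ ⊢
  intro γ f hf
  rw [StarOp.mem_idealOf_spanSingleton_mul_starBar ht'] at hf ⊢
  exact StarOp.exists_mem_localizingSystem_decompose_mul_mem 𝒜 hA₀ hf γ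
end
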